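/- arXiv:1906.05661 — 6 statements merged into one kernel-verified Lean document; each statement's English description precedes it below -/
import Mathlib

section
/- Let ℓ: R^p → R be a function, w_t ∈ R^p, η > 0, d = ∇ℓ(w_t) and l = ℓ(w_t) ≥ 0. Then the point w_{t+1} = w_t - min{l/‖d‖², η}·d (interpreted as w_t when d = 0) is the unique minimizer over w ∈ R^p of (1/(2η))‖w - w_t‖² + max{l + dᵀ(w - w_t), 0}. -/
/-!
Writing `γ = min (l / ‖d‖²) η`, the vector `(wt - wnext) / η = (γ / η) • d` is a subgradient of the
hinge `w ↦ max (l + ⟪d, w - wt⟫) 0` at `wnext`: the slope `γ / η` lies in `[0, 1]`, it equals `1`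
when the step is clipped at `η`, and otherwise the hinge is at its kink
(or, when `d = 0`, constant: then `l / 0 = 0` makes `wnext = wt`). This optimality condition
for the proximal problem, combined with the expansion of `‖w - wt‖²` around `wnext`, gives
`obj wnext + ‖w - wnext‖² / (2η) ≤ obj w`, which yields both minimality and uniqueness.
-/

open RealInnerProductSpace

lemma add_mul_le_max_add_zero {a s t : ℝ} (hs0 : 0 ≤ s) (hs1 : s ≤ 1) (ha : 0 ≤ a)
    (h : s = 1 ∨ a = 0) : a + s * t ≤ max (a + t) 0 := by
  rcases h with rfl | rfl
  · simp
  · rcases le_total 0 t with ht | ht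
    · simpa using le_max_of_le_left (mul_le_of_le_one_left ht hs1)
    · simpa using le_max_of_le_right (mul_nonpos_of_nonneg_of_nonpos hs0 ht)

lemma min_div_mul_le_and_cases {l η N : ℝ} (hη : 0 < η) (hl : 0 ≤ l) (hN : 0 ≤ N) :
    0 ≤ min (l / N) η ∧ min (l / N) η ≤ η ∧ min (l / N) η * N ≤ l ∧
      (min (l / N) η = η ∨ min (l / N) η * N = l ∨ N = 0) := by
  refine ⟨le_min (by positivity) hη.le, min_le_right _ _, ?_, ?_⟩
  · rcases hN.eq_or_lt with rfl | hN
    · simpa using hl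
    · exact (mul_le_mul_of_nonneg_right (min_le_left _ _) hN.le).trans (div_mul_cancel₀ _ hN.ne').le
  · rcases min_choice (l / N) η with h | h <;> rw [h]
    · rcases eq_or_ne N 0 with hN | hN
      · exact .inr (.inr hN)
      · exact .inr (.inl (div_mul_cancel₀ _ hN))
    · exact .inl rfl

section ProximalPoint

variable {E : Type*} [NormedAddCommGroup E]

lemma forall_le_and_eq_of_add_sq_norm_le {f : E → ℝ} {z : E} {c : ℝ} (hc : 0 < c)
    (hf : ∀ w, f z + c * ‖w - z‖ ^ 2 ≤ f w) :
    (∀ w, f z ≤ f w) ∧ ∀ w, f w = f z → w = z := by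
  refine ⟨fun w => le_trans (le_add_of_nonneg_right (by positivity)) (hf w), fun w hw => ?_⟩
  have h := hf w
  rw [hw] at h
  have : ‖w - z‖ ^ 2 = 0 := le_antisymm (by nlinarith) (by positivity)
  simpa [sub_eq_zero] using this

variable [InnerProductSpace ℝ E]

lemma add_sq_norm_le_of_forall_inner_le {g : E → ℝ} {η : ℝ} (hη : 0 < η) {x z : E}
    (hg : ∀ w, g z + ⟪x - z, w - z⟫ / η ≤ g w) (w : E) :
    (1 / (2 * η)) * ‖z - x‖ ^ 2 + g z + (1 / (2 * η)) * ‖w - z‖ ^ 2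
      ≤ (1 / (2 * η)) * ‖w - x‖ ^ 2 + g w := by
  have hsplit : ‖w - x‖ ^ 2 = ‖w - z‖ ^ 2 - 2 * ⟪x - z, w - z⟫ + ‖z - x‖ ^ 2 := by
    rw [← sub_add_sub_cancel w z x, norm_add_sq_real, real_inner_comm, ← neg_sub x z,
      inner_neg_left]
    ring
  have := hg w
  rw [hsplit]
  field_simp
  field_simp at this
  linarith

lemma hinge_subgradient_at_step {wt d : E} {l η γ : ℝ} (hη : 0 < η) (hγ0 : 0 ≤ γ)
    (hγη : γ ≤ η) (hγl : γ * ‖d‖ ^ 2 ≤ l) (h : γ = η ∨ γ * ‖d‖ ^ 2 = l ∨ d = 0) (w : E) :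
    max (l + ⟪d, (wt - γ • d) - wt⟫) 0 + ⟪wt - (wt - γ • d), w - (wt - γ • d)⟫ / η
      ≤ max (l + ⟪d, w - wt⟫) 0 := by
  rcases eq_or_ne d 0 with rfl | hd
  · simp
  set z := wt - γ • d
  have hz : z - wt = -(γ • d) := by simp [z]
  have hdz : ⟪d, z - wt⟫ = -(γ * ‖d‖ ^ 2) := by
    rw [hz, inner_neg_right, real_inner_smul_right, real_inner_self_eq_norm_sq]
  have hw : ⟪d, w - wt⟫ = ⟪d, w - z⟫ - γ * ‖d‖ ^ 2 := by
    rw [← sub_add_sub_cancel w z wt, inner_add_right, hdz]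
    ring
  have hslope : ⟪wt - z, w - z⟫ / η = γ / η * ⟪d, w - z⟫ := by
    rw [show wt - z = γ • d by simp [z], real_inner_smul_left]
    ring
  rw [hdz, hw, hslope, ← sub_eq_add_neg, max_eq_left (by linarith),
    show l + (⟪d, w - z⟫ - γ * ‖d‖ ^ 2) = l - γ * ‖d‖ ^ 2 + ⟪d, w - z⟫ by ring]
  refine add_mul_le_max_add_zero (by positivity) ((div_le_one hη).2 hγη) (by linarith) ?_
  rcases h with rfl | h | h
  · exact .inl (div_self hη.ne')
  · exact .inr (by linarith)
  · exact absurd h hd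

end ProximalPoint

theorem alig_proximal_interpretation_general
    {p : ℕ}
    (wt d : EuclideanSpace ℝ (Fin p)) (l η : ℝ)
    (hη : 0 < η) (hl0 : 0 ≤ l) :
    let wnext := wt - (min (l / ‖d‖ ^ 2) η) • d
    let obj : EuclideanSpace ℝ (Fin p) → ℝ :=
      fun w => (1 / (2 * η)) * ‖w - wt‖ ^ 2 + max (l + ⟪d, w - wt⟫) 0
    (∀ w, obj wnext ≤ obj w) ∧ ∀ w, obj w = obj wnext → w = wnext := by
  intro wnext obj
  obtain ⟨hγ0, hγη, hγl, hcases⟩ := min_div_mul_le_and_cases hη hl0 (sq_nonneg ‖d‖)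
  have hsubgrad := hinge_subgradient_at_step (wt := wt) hη hγ0 hγη hγl
    (by simpa [sq_eq_zero_iff, norm_eq_zero] using hcases)
  exact forall_le_and_eq_of_add_sq_norm_le (f := obj) (c := 1 / (2 * η)) (by positivity)
    (add_sq_norm_le_of_forall_inner_le (g := fun w => max (l + ⟪d, w - wt⟫) 0) hη hsubgrad)

/-- Proximal interpretation of the ALI-G update: with `d = ∇ℓ(wt)`, `l = ℓ(wt) ≥ 0`
and maximal learning-rate `η > 0`, the point `wt - min{l/‖d‖², η} • d` is the unique
minimizer of `w ↦ (1/(2η))‖w - wt‖² + max{l + ⟪d, w - wt⟫, 0}`. -/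
theorem alig_proximal_interpretation
    {p : ℕ} (ℓ : EuclideanSpace ℝ (Fin p) → ℝ)
    (wt d : EuclideanSpace ℝ (Fin p)) (l η : ℝ)
    (hη : 0 < η) (hd : HasGradientAt ℓ d wt) (hl : l = ℓ wt) (hl0 : 0 ≤ l) :
    let wnext := wt - (min (l / ‖d‖ ^ 2) η) • d
    let obj : EuclideanSpace ℝ (Fin p) → ℝ :=
      fun w => (1 / (2 * η)) * ‖w - wt‖ ^ 2 + max (l + ⟪d, w - wt⟫) 0
    (∀ w, obj wnext ≤ obj w) ∧ ∀ w, obj w = obj wnext → w = wnext :=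
  alig_proximal_interpretation_general wt d l η hη hl0
end

section
/- Let ℓ: R^p → R be α-strongly convex, non-negative, with inf ℓ ≤ ε, and let δ ≥ 2αε. Then for all w ∈ R^p, ℓ(w)/(‖∇ℓ(w)‖² + δ) ≤ 1/(2α). -/
open RealInnerProductSpace

/-! Completing the square in the strong-convexity lower bound at `w` gives the
Polyak–Łojasiewicz inequality `ℓ w - ‖∇ℓ w‖² / (2α) ≤ inf ℓ ≤ ε`, and since `ε ≤ δ / (2α)`
this says exactly `ℓ w ≤ (‖∇ℓ w‖² + δ) / (2α)`. -/

section PolyakLojasiewicz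

variable {E : Type*} [NormedAddCommGroup E] [InnerProductSpace ℝ E]

lemma neg_sq_norm_div_le_inner_add_mul_sq_norm (g v : E) {α : ℝ} (hα : 0 < α) :
    -(‖g‖ ^ 2 / (2 * α)) ≤ ⟪g, v⟫ + α / 2 * ‖v‖ ^ 2 := by
  have hsq : 0 ≤ ‖α • v + g‖ ^ 2 := sq_nonneg _
  rw [norm_add_sq_real, norm_smul, real_inner_smul_left, real_inner_comm,
    Real.norm_of_nonneg hα.le] at hsq
  rw [neg_le_iff_add_nonneg, ← mul_le_mul_iff_right₀ (by positivity : 0 < 2 * α)]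
  field_simp
  nlinarith

lemma sub_sq_norm_div_le_of_forall_le {f : E → ℝ} {g w : E} {α : ℝ} (hα : 0 < α)
    (hf : ∀ u, f u ≥ f w + ⟪g, u - w⟫ + α / 2 * ‖u - w‖ ^ 2) (u : E) :
    f w - ‖g‖ ^ 2 / (2 * α) ≤ f u := by
  linarith [hf u, neg_sq_norm_div_le_inner_add_mul_sq_norm g (u - w) hα]

lemma sub_sq_norm_div_le_sInf_range {f : E → ℝ} {g w : E} {α : ℝ} (hα : 0 < α)
    (hf : ∀ u, f u ≥ f w + ⟪g, u - w⟫ + α / 2 * ‖u - w‖ ^ 2) :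
    f w - ‖g‖ ^ 2 / (2 * α) ≤ sInf (Set.range f) :=
  le_csInf (Set.range_nonempty f) <| Set.forall_mem_range.2 <|
    sub_sq_norm_div_le_of_forall_le hα hf

end PolyakLojasiewicz

theorem strongly_convex_stepsize_upper_bound_general
    {p : ℕ} (ℓ : EuclideanSpace ℝ (Fin p) → ℝ)
    (g : EuclideanSpace ℝ (Fin p) → EuclideanSpace ℝ (Fin p))
    (α ε δ : ℝ) (hα : 0 < α) (hε : 0 ≤ ε)
    (hstrong : ∀ u w, ℓ u ≥ ℓ w + ⟪g w, u - w⟫ + (α / 2) * ‖u - w‖ ^ 2)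
    (hinf : sInf (Set.range ℓ) ≤ ε)
    (hδ : 2 * α * ε ≤ δ) :
    ∀ w, ℓ w / (‖g w‖ ^ 2 + δ) ≤ 1 / (2 * α) := by
  intro w
  have hPL := sub_sq_norm_div_le_sInf_range hα (hstrong · w)
  have hε_le : ε ≤ δ / (2 * α) := (le_div_iff₀' (by positivity)).2 hδ
  have hδ_nonneg : 0 ≤ δ := le_trans (by positivity) hδ
  refine div_le_of_le_mul₀ (by positivity) (by positivity) ?_
  calc ℓ w ≤ ‖g w‖ ^ 2 / (2 * α) + δ / (2 * α) := by linarith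
    _ = 1 / (2 * α) * (‖g w‖ ^ 2 + δ) := by ring

/-- Upper bound on the ALI-G step-size for α-strongly convex non-negative losses
with interpolation tolerance ε: `ℓ(w)/(‖∇ℓ(w)‖² + δ) ≤ 1/(2α)` when `δ ≥ 2αε`. -/
theorem strongly_convex_stepsize_upper_bound
    {p : ℕ} (ℓ : EuclideanSpace ℝ (Fin p) → ℝ)
    (g : EuclideanSpace ℝ (Fin p) → EuclideanSpace ℝ (Fin p))
    (α ε δ : ℝ) (hα : 0 < α) (hε : 0 ≤ ε)
    (hgrad : ∀ w, HasGradientAt ℓ (g w) w)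
    (hstrong : ∀ u w, ℓ u ≥ ℓ w + ⟪g w, u - w⟫ + (α / 2) * ‖u - w‖ ^ 2)
    (hnonneg : ∀ w, 0 ≤ ℓ w)
    (hinf : sInf (Set.range ℓ) ≤ ε)
    (hδ : 2 * α * ε ≤ δ) :
    ∀ w, ℓ w / (‖g w‖ ^ 2 + δ) ≤ 1 / (2 * α) :=
  strongly_convex_stepsize_upper_bound_general ℓ g α ε δ hα hε hstrong hinf hδ
end

section
/- Let f(w) = w² - |w|³ on [-3/5, 3/5], which has minimum value 0 at w = 0. Starting from w₀ = -3/5, one step of gradient descent with the Polyak step-size, w₁ = w₀ - (f(w₀)/f'(w₀)²)·f'(w₀), yields w₁ = 3/5. By symmetry of f, the iterates oscillate between -3/5 and 3/5 indefinitely. -/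
/-!
At `w = ∓3/5` we have `f w = 18/125` and `f' w = ∓3/25`, so the Polyak step `f w / f' w` has
length `6/5` and carries `-3/5` exactly to `3/5` and back: the iteration is a two-cycle.
-/

/-- The Polyak step-size taken with optimal value `f⋆ = 0`. -/
noncomputable def polyakStep (f f' : ℝ → ℝ) (w : ℝ) : ℝ :=
  w - f w / f' w ^ 2 * f' w

theorem eq_ite_even_of_iterate_two_cycle {α : Type*} {g : α → α} {a b : α}
    (hab : g a = b) (hba : g b = a) {u : ℕ → α} (h0 : u 0 = a)
    (hrec : ∀ n, u (n + 1) = g (u n)) (n : ℕ) :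
    u n = if Even n then a else b := by
  induction n with
  | zero => simpa using h0
  | succ k ih =>
    by_cases hk : Even k
    · simp [hrec, ih, hk, Nat.even_add_one, hab]
    · simp [hrec, ih, hk, Nat.even_add_one, hba]

/-- Oscillation of the Polyak step-size on the non-convex function
`f(w) = w² - |w|³` with derivative `f'(w) = 2w - 3·sign(w)·w²` and minimum
value `f⋆ = 0`: starting from `w₀ = -3/5`, the iterates
`w_{n+1} = w_n - (f(w_n)/f'(w_n)²)·f'(w_n)` oscillate between `-3/5` and `3/5`. -/
theorem polyak_oscillation
    (f : ℝ → ℝ) (hf : ∀ w, f w = w ^ 2 - |w| ^ 3)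
    (f' : ℝ → ℝ) (hf' : ∀ w, f' w = 2 * w - 3 * (if 0 ≤ w then (1 : ℝ) else -1) * w ^ 2)
    (u : ℕ → ℝ) (h0 : u 0 = -(3 : ℝ) / 5)
    (hrec : ∀ n, u (n + 1) = u n - (f (u n) / (f' (u n)) ^ 2) * f' (u n)) :
    ∀ n, u n = if Even n then -(3 : ℝ) / 5 else 3 / 5 := by
  have f_left : f (-3 / 5) = 18 / 125 := by
    rw [hf, abs_of_neg (by norm_num)]; norm_num
  have f_right : f (3 / 5) = 18 / 125 := by
    rw [hf, abs_of_pos (by norm_num)]; norm_num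
  have f'_left : f' (-3 / 5) = -3 / 25 := by
    rw [hf', if_neg (by norm_num)]; norm_num
  have f'_right : f' (3 / 5) = 3 / 25 := by
    rw [hf', if_pos (by norm_num)]; norm_num
  refine eq_ite_even_of_iterate_two_cycle (g := polyakStep f f') ?_ ?_ h0 hrec
  · rw [polyakStep, f_left, f'_left]; norm_num
  · rw [polyakStep, f_right, f'_right]; norm_num
end

section
/- Let Ω = R^p and suppose each loss ℓ_z is β-smooth, satisfies the RSI with constant α, and vanishes at a common point w_⋆ (ℓ_z(w_⋆) = 0 for all z, so f_⋆ = 0). Suppose 1/(2β) ≤ η ≤ 2α/β². Consider the ALI-G iterates w_{t+1} = w_t - γ_t ∇ℓ_{z_t}(w_t) with γ_t = min{ℓ_{z_t}(w_t)/‖∇ℓ_{z_t}(w_t)‖², η} (and δ = 0). Then for every realization of the sample sequence, f(w_{T+1}) - f_⋆ ≤ (β/2)·exp((-α/β + ηβ/2)·T)·‖w₀ - w_⋆‖². -/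
/-!
Along the ALI-G iteration the squared distance `D_t = ‖w_t - w⋆‖²` contracts by the factor
`1 - α/β + ηβ/2 ≤ exp (-α/β + ηβ/2)`. Expanding the square, RSI bounds the cross term by
`-2γαD_t`, while the cap `γ‖∇ℓ‖² ≤ ℓ` of the Polyak step and the quadratic growth
`ℓ ≤ (β/2)D_t` (the descent lemma at the common minimiser `w⋆`) bound the quadratic term by
`γβD_t/2`; the step size lies in `[1/(2β), η]`, the lower bound because `‖∇ℓ‖² ≤ 2βℓ`.
Averaging the quadratic growth bound over `z` gives `f ≤ (β/2)D`.
-/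

open RealInnerProductSpace MeasureTheory

section LipschitzGradient

variable {E : Type*} [NormedAddCommGroup E] [InnerProductSpace ℝ E] [CompleteSpace E]
  {φ : E → ℝ} {G : E → E} {α β η : ℝ}

theorem HasGradientAt.hasDerivAt_comp_add_smul {x u c : E} {t : ℝ}
    (h : HasGradientAt φ x (u + t • c)) :
    HasDerivAt (fun s : ℝ => φ (u + s • c)) ⟪x, c⟫ t := by
  have hline : HasDerivAt (fun s : ℝ => u + s • c) c t := by
    simpa using ((hasDerivAt_id t).smul_const c).const_add u
  simpa [Function.comp_def] using h.hasFDerivAt.comp_hasDerivAt t hline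

theorem HasGradientAt.eq_zero_of_isLocalMin {x x₀ : E} (h : HasGradientAt φ x x₀)
    (hmin : IsLocalMin φ x₀) : x = 0 :=
  (InnerProductSpace.toDual ℝ E).map_eq_zero_iff.mp (hmin.hasFDerivAt_eq_zero h.hasFDerivAt)

variable (hgrad : ∀ x, HasGradientAt φ (G x) x) (hsmooth : ∀ x y, ‖G x - G y‖ ≤ β * ‖x - y‖)
include hgrad hsmooth

theorem le_add_inner_add_sq_of_lipschitz_gradient (u v : E) :
    φ v ≤ φ u + ⟪G u, v - u⟫ + β / 2 * ‖v - u‖ ^ 2 := by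
  set c := v - u
  set ψ : ℝ → ℝ := fun t => φ (u + t • c) - t * ⟪G u, c⟫ - β / 2 * t ^ 2 * ‖c‖ ^ 2
  have hψ : ∀ t, HasDerivAt ψ (⟪G (u + t • c), c⟫ - ⟪G u, c⟫ - β * t * ‖c‖ ^ 2) t := fun t => by
    refine (((hgrad (u + t • c)).hasDerivAt_comp_add_smul.sub
      ((hasDerivAt_id t).mul_const ⟪G u, c⟫)).sub
      (((hasDerivAt_pow 2 t).const_mul (β / 2)).mul_const (‖c‖ ^ 2))).congr_deriv ?_
    simp only [Nat.cast_ofNat, one_mul, Nat.add_one_sub_one, pow_one]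
    ring
  have hanti : AntitoneOn ψ (Set.Ici 0) := by
    refine antitoneOn_of_hasDerivWithinAt_nonpos (convex_Ici 0)
      (fun t _ => (hψ t).continuousAt.continuousWithinAt) (fun t _ => (hψ t).hasDerivWithinAt) ?_
    intro t ht
    rw [interior_Ici, Set.mem_Ioi] at ht
    have hlip : ‖G (u + t • c) - G u‖ ≤ β * (t * ‖c‖) := by
      simpa [norm_smul, abs_of_pos ht] using hsmooth (u + t • c) u
    have hcs := real_inner_le_norm (G (u + t • c) - G u) c
    rw [inner_sub_left] at hcs
    nlinarith [norm_nonneg c]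
  have h : ψ 1 ≤ ψ 0 := hanti (Set.mem_Ici.mpr le_rfl) (Set.mem_Ici.mpr zero_le_one) zero_le_one
  have hψ0 : ψ 0 = φ u := by simp [ψ]
  have hψ1 : ψ 1 = φ v - ⟪G u, v - u⟫ - β / 2 * ‖v - u‖ ^ 2 := by simp [ψ, c]
  linarith

theorem le_add_half_mul_sq_of_forall_le {x₀ : E} (hmin : ∀ x, φ x₀ ≤ φ x) (v : E) :
    φ v ≤ φ x₀ + β / 2 * ‖v - x₀‖ ^ 2 := by
  have hG : G x₀ = 0 := (hgrad x₀).eq_zero_of_isLocalMin (.of_forall hmin)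
  simpa [hG] using le_add_inner_add_sq_of_lipschitz_gradient hgrad hsmooth x₀ v

theorem sq_norm_le_two_mul_of_nonneg (hβ : 0 < β) (hnonneg : ∀ x, 0 ≤ φ x) (u : E) :
    ‖G u‖ ^ 2 ≤ 2 * β * φ u := by
  have h := le_add_inner_add_sq_of_lipschitz_gradient hgrad hsmooth u (u - β⁻¹ • G u)
  rw [sub_sub_cancel_left, inner_neg_right, real_inner_smul_right, real_inner_self_eq_norm_sq,
    norm_neg, norm_smul, Real.norm_of_nonneg (inv_nonneg.mpr hβ.le)] at h
  have h0 := hnonneg (u - β⁻¹ • G u)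
  field_simp at h
  rw [one_div] at h
  nlinarith

noncomputable def aligStep (φ : E → ℝ) (G : E → E) (η : ℝ) (w : E) : E :=
  w - min (φ w / ‖G w‖ ^ 2) η • G w

theorem sq_norm_aligStep_sub_le (hnonneg : ∀ x, 0 ≤ φ x) {x₀ : E} (hzero : φ x₀ = 0)
    (hrsi : ∀ w, α * ‖w - x₀‖ ^ 2 ≤ ⟪G w, w - x₀⟫) (hα : 0 < α) (hβ : 0 < β)
    (hη : 1 / (2 * β) ≤ η) (w : E) :
    ‖aligStep φ G η w - x₀‖ ^ 2 ≤ (1 - α / β + η * β / 2) * ‖w - x₀‖ ^ 2 := by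
  set γ := min (φ w / ‖G w‖ ^ 2) η
  set D := ‖w - x₀‖ ^ 2
  by_cases hG : G w = 0
  · have hD : D = 0 := by
      have h := hrsi w
      rw [hG, inner_zero_left] at h
      exact le_antisymm (nonpos_of_mul_nonpos_right h hα) (sq_nonneg _)
    rw [hD, mul_zero, aligStep, hG, smul_zero, sub_zero]
    exact hD.le
  have hGpos : 0 < ‖G w‖ ^ 2 := by positivity
  have hγG : γ * ‖G w‖ ^ 2 ≤ φ w := (le_div_iff₀ hGpos).mp (min_le_left _ _)
  have hγ_ge : 1 / (2 * β) ≤ γ := by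
    refine le_min ?_ hη
    rw [div_le_div_iff₀ (by positivity) hGpos]
    linarith [sq_norm_le_two_mul_of_nonneg hgrad hsmooth hβ hnonneg w]
  have hγ_nonneg : 0 ≤ γ := (by positivity : 0 < 1 / (2 * β)).le.trans hγ_ge
  have hquad : φ w ≤ β / 2 * D := by
    simpa only [hzero, zero_add] using
      le_add_half_mul_sq_of_forall_le hgrad hsmooth (fun x => hzero.trans_le (hnonneg x)) w
  have hαγ : α / β ≤ 2 * α * γ := by
    calc α / β = 2 * α * (1 / (2 * β)) := by field_simp
      _ ≤ 2 * α * γ := by gcongr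
  calc ‖aligStep φ G η w - x₀‖ ^ 2 = D - 2 * γ * ⟪G w, w - x₀⟫ + γ * (γ * ‖G w‖ ^ 2) := by
        rw [aligStep, sub_right_comm, norm_sub_sq_real, real_inner_smul_right, real_inner_comm,
          norm_smul, Real.norm_of_nonneg hγ_nonneg]
        ring
    _ ≤ D - 2 * γ * (α * D) + γ * (β / 2 * D) := by
        gcongr D - 2 * γ * ?_ + γ * ?_
        exacts [hrsi w, hγG.trans hquad]
    _ = (1 - 2 * α * γ + γ * (β / 2)) * D := by ring
    _ ≤ (1 - α / β + η * β / 2) * D := by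
        gcongr
        nlinarith [min_le_right (φ w / ‖G w‖ ^ 2) η]

end LipschitzGradient

theorem integral_le_of_forall_le {Z : Type*} [MeasurableSpace Z] {μ : Measure Z}
    [IsProbabilityMeasure μ] {F : Z → ℝ} {C : ℝ} (hF : ∀ z, 0 ≤ F z) (hC : ∀ z, F z ≤ C) :
    ∫ z, F z ∂μ ≤ C := by
  simpa using integral_mono_of_nonneg (μ := μ) (.of_forall hF) (integrable_const C) (.of_forall hC)

theorem neg_div_add_mul_div_two_nonpos {α β η : ℝ} (hβ : 0 < β) (hη : η ≤ 2 * α / β ^ 2) :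
    -α / β + η * β / 2 ≤ 0 := by
  have : η * β / 2 ≤ α / β := by
    rw [le_div_iff₀ hβ]
    nlinarith [(le_div_iff₀ (by positivity : 0 < β ^ 2)).mp hη]
  linarith [neg_div β α]

/-- Deterministic linear convergence of ALI-G (δ = 0) under RSI and β-smoothness,
with `1/(2β) ≤ η ≤ 2α/β²` and perfect interpolation `ℓ_z(w⋆) = 0`:
`f(w_{T+1}) - f⋆ ≤ (β/2)·exp((-α/β + ηβ/2)·T)·‖w₀ - w⋆‖²`, where `f⋆ = 0`. -/
theorem alig_rsi_convergence
    {p : ℕ} {Z : Type*} [MeasurableSpace Z]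
    (μ : Measure Z) [IsProbabilityMeasure μ]
    (ℓ : Z → EuclideanSpace ℝ (Fin p) → ℝ)
    (g : Z → EuclideanSpace ℝ (Fin p) → EuclideanSpace ℝ (Fin p))
    (α β η : ℝ) (hα : 0 < α) (hβ : 0 < β)
    (hgrad : ∀ z w, HasGradientAt (ℓ z) (g z w) w)
    (hsmooth : ∀ z u v, ‖g z u - g z v‖ ≤ β * ‖u - v‖)
    (hnonneg : ∀ z w, 0 ≤ ℓ z w)
    (wstar : EuclideanSpace ℝ (Fin p))
    (hrsi : ∀ z w, ⟪g z w, w - wstar⟫ ≥ α * ‖w - wstar‖ ^ 2)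
    (hinterp : ∀ z, ℓ z wstar = 0)
    (hη₁ : 1 / (2 * β) ≤ η) (hη₂ : η ≤ 2 * α / β ^ 2)
    (f : EuclideanSpace ℝ (Fin p) → ℝ) (hf : ∀ w, f w = ∫ z, ℓ z w ∂μ)
    (z : ℕ → Z) (w : ℕ → EuclideanSpace ℝ (Fin p))
    (hrec : ∀ t, w (t + 1) =
      w t - (min (ℓ (z t) (w t) / ‖g (z t) (w t)‖ ^ 2) η) • g (z t) (w t))
    (T : ℕ) :
    f (w (T + 1)) - 0 ≤
      (β / 2) * Real.exp ((-α / β + η * β / 2) * T) * ‖w 0 - wstar‖ ^ 2 := by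
  set e := -α / β + η * β / 2 with he_def
  have hstep : ∀ t, ‖w (t + 1) - wstar‖ ^ 2 ≤ Real.exp e * ‖w t - wstar‖ ^ 2 := fun t => by
    rw [hrec t]
    refine (sq_norm_aligStep_sub_le (hgrad (z t)) (hsmooth (z t)) (hnonneg (z t)) (hinterp (z t))
      (hrsi (z t)) hα hβ hη₁ (w t)).trans (mul_le_mul_of_nonneg_right ?_ (sq_nonneg _))
    linarith [Real.add_one_le_exp e, neg_div β α]
  have hdist : ‖w (T + 1) - wstar‖ ^ 2 ≤ Real.exp e ^ (T + 1) * ‖w 0 - wstar‖ ^ 2 :=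
    le_geom (u := fun t => ‖w t - wstar‖ ^ 2) (Real.exp_pos e).le (T + 1) fun t _ => hstep t
  have hpow : Real.exp e ^ (T + 1) ≤ Real.exp (e * T) := by
    rw [← Real.exp_nat_mul, Real.exp_le_exp]
    push_cast
    nlinarith [neg_div_add_mul_div_two_nonpos hβ hη₂]
  have hf_le : f (w (T + 1)) ≤ β / 2 * ‖w (T + 1) - wstar‖ ^ 2 := by
    rw [hf]
    refine integral_le_of_forall_le (fun z' => hnonneg z' _) fun z' => ?_
    simpa only [hinterp z', zero_add] using le_add_half_mul_sq_of_forall_le (hgrad z')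
      (hsmooth z') (fun x => (hinterp z').trans_le (hnonneg z' x)) (w (T + 1))
  calc f (w (T + 1)) - 0 ≤ β / 2 * (Real.exp e ^ (T + 1) * ‖w 0 - wstar‖ ^ 2) := by
        rw [sub_zero]; exact hf_le.trans (by gcongr)
    _ ≤ β / 2 * Real.exp (e * T) * ‖w 0 - wstar‖ ^ 2 := by
        rw [mul_assoc]; gcongr
end

section
/- Basic iterate bound for ALI-G in the convex setting: let Ω ⊆ R^p be convex, ℓ: R^p → R convex and differentiable with ℓ ≥ 0, δ ≥ 0, η > 0, w_t ∈ Ω, w_⋆ ∈ Ω, γ_t = min{ℓ(w_t)/(‖∇ℓ(w_t)‖² + δ), η}, and w_{t+1} = Π_Ω(w_t - γ_t ∇ℓ(w_t)) where Π_Ω is Euclidean projection onto Ω. Then ‖w_{t+1} - w_⋆‖² ≤ ‖w_t - w_⋆‖² - γ_t(ℓ(w_t) - ℓ(w_⋆)) + γ_t ℓ(w_⋆). -/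
/-!
Projection onto a convex set does not increase the distance to any point of the set, so it
suffices to bound `‖w_t - γ_t ∇ℓ(w_t) - w_⋆‖²`. Expanding the square, the cross term is
controlled by the first-order convexity inequality `ℓ(w_t) - ℓ(w_⋆) ≤ ⟪∇ℓ(w_t), w_t - w_⋆⟫`
and the quadratic term by `γ_t ‖∇ℓ(w_t)‖² ≤ ℓ(w_t)`, which is what the ALI-G step size
is designed to guarantee.
-/

open RealInnerProductSpace Set

theorem min_div_add_mul_le {a b δ : ℝ} (η : ℝ) (ha : 0 ≤ a) (hb : 0 ≤ b) (hδ : 0 ≤ δ) :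
    min (a / (b + δ)) η * b ≤ a := by
  rcases (add_nonneg hb hδ).eq_or_lt with hzero | hpos
  · rw [show b = 0 by linarith, mul_zero]
    exact ha
  calc min (a / (b + δ)) η * b ≤ a / (b + δ) * (b + δ) := by
        gcongr
        · exact min_le_left _ _
        · linarith
    _ = a := div_mul_cancel₀ a hpos.ne'

theorem ConvexOn.apply_sub_le_sub_of_hasFDerivAt {E : Type*} [NormedAddCommGroup E]
    [NormedSpace ℝ E] {s : Set E} {f : E → ℝ} {f' : E →L[ℝ] ℝ} {x y : E}
    (hf : ConvexOn ℝ s f) (hx : x ∈ s) (hy : y ∈ s) (hf' : HasFDerivAt f f' x) :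
    f' (y - x) ≤ f y - f x := by
  let L : ℝ →ᵃ[ℝ] E := AffineMap.lineMap x y
  have hL0 : L 0 = x := AffineMap.lineMap_apply_zero x y
  have hL1 : L 1 = y := AffineMap.lineMap_apply_one x y
  have hline : ConvexOn ℝ (L ⁻¹' s) (f ∘ L) := hf.comp_affineMap L
  have hderiv : HasDerivAt (f ∘ L) (f' (y - x)) 0 :=
    (hL0 ▸ hf').comp_hasDerivAt (0 : ℝ) AffineMap.hasDerivAt_lineMap
  simpa [slope_def_field, hL0, hL1] using
    hline.le_slope_of_hasDerivAt (x := 0) (y := 1) (by simpa [hL0]) (by simpa [hL1]) one_pos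
      hderiv

section InnerProductSpace

variable {F : Type*} [NormedAddCommGroup F] [InnerProductSpace ℝ F]

theorem real_inner_sub_le_zero_of_forall_norm_sub_le {K : Set F} (hK : Convex ℝ K) {x p : F}
    (hp : p ∈ K) (hmin : ∀ z ∈ K, ‖x - p‖ ≤ ‖x - z‖) : ∀ y ∈ K, ⟪x - p, y - p⟫ ≤ 0 := by
  have : Nonempty K := ⟨⟨p, hp⟩⟩
  refine (norm_eq_iInf_iff_real_inner_le_zero hK hp).mp (le_antisymm (le_ciInf ?_) ?_)
  · exact fun z => hmin z z.2
  · exact ciInf_le ⟨0, fun _ ⟨_, h⟩ => h ▸ norm_nonneg _⟩ (⟨p, hp⟩ : K)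

theorem norm_sub_le_of_forall_norm_sub_le {K : Set F} (hK : Convex ℝ K) {x p y : F}
    (hp : p ∈ K) (hmin : ∀ z ∈ K, ‖x - p‖ ≤ ‖x - z‖) (hy : y ∈ K) : ‖p - y‖ ≤ ‖x - y‖ := by
  have hinner : 0 ≤ ⟪x - p, p - y⟫ := by
    rw [← neg_sub y p, inner_neg_right, neg_nonneg]
    exact real_inner_sub_le_zero_of_forall_norm_sub_le hK hp hmin y hy
  have hsplit : ‖x - y‖ ^ 2 = ‖x - p‖ ^ 2 + 2 * ⟪x - p, p - y⟫ + ‖p - y‖ ^ 2 := by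
    rw [← norm_add_sq_real, sub_add_sub_cancel]
  refine (sq_le_sq₀ (norm_nonneg _) (norm_nonneg _)).mp ?_
  nlinarith [sq_nonneg ‖x - p‖]

variable [CompleteSpace F]

theorem ConvexOn.sub_le_inner_of_hasGradientAt {s : Set F} {f : F → ℝ} {g x y : F}
    (hf : ConvexOn ℝ s f) (hx : x ∈ s) (hy : y ∈ s) (hg : HasGradientAt f g x) :
    f x - f y ≤ ⟪g, x - y⟫ := by
  have := hf.apply_sub_le_sub_of_hasFDerivAt hx hy hg
  rw [InnerProductSpace.toDual_apply_apply, ← neg_sub x y, inner_neg_right] at this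
  linarith

theorem ConvexOn.norm_sub_smul_gradient_sub_sq_le {s : Set F} {f : F → ℝ} {g w w' : F} {γ : ℝ}
    (hf : ConvexOn ℝ s f) (hw : w ∈ s) (hw' : w' ∈ s) (hg : HasGradientAt f g w) (hγ : 0 ≤ γ)
    (hγg : γ * ‖g‖ ^ 2 ≤ f w) :
    ‖w - γ • g - w'‖ ^ 2 ≤ ‖w - w'‖ ^ 2 - γ * (f w - f w') + γ * f w' := by
  have hdescent := hf.sub_le_inner_of_hasGradientAt hw hw' hg
  calc ‖w - γ • g - w'‖ ^ 2
      = ‖w - w'‖ ^ 2 - 2 * γ * ⟪g, w - w'⟫ + γ * (γ * ‖g‖ ^ 2) := by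
        rw [sub_right_comm, norm_sub_sq_real, real_inner_smul_right, norm_smul,
          Real.norm_of_nonneg hγ, real_inner_comm]
        ring
    _ ≤ ‖w - w'‖ ^ 2 - 2 * γ * (f w - f w') + γ * f w := by gcongr
    _ = ‖w - w'‖ ^ 2 - γ * (f w - f w') + γ * f w' := by ring

end InnerProductSpace

theorem alig_basic_iterate_bound_general
    {p : ℕ} (ℓ : EuclideanSpace ℝ (Fin p) → ℝ)
    (g : EuclideanSpace ℝ (Fin p) → EuclideanSpace ℝ (Fin p))
    (δ η : ℝ) (hδ : 0 ≤ δ) (hη : 0 < η)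
    (hconv : ConvexOn ℝ Set.univ ℓ)
    (hgrad : ∀ w, HasGradientAt ℓ (g w) w)
    (hnonneg : ∀ w, 0 ≤ ℓ w)
    (K : Set (EuclideanSpace ℝ (Fin p))) (hK : Convex ℝ K)
    (proj : EuclideanSpace ℝ (Fin p) → EuclideanSpace ℝ (Fin p))
    (hproj : ∀ x, proj x ∈ K ∧ ∀ y ∈ K, ‖x - proj x‖ ≤ ‖x - y‖)
    (wt wstar : EuclideanSpace ℝ (Fin p)) (hws : wstar ∈ K) :
    let γ := min (ℓ wt / (‖g wt‖ ^ 2 + δ)) η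
    let wnext := proj (wt - γ • g wt)
    ‖wnext - wstar‖ ^ 2 ≤
      ‖wt - wstar‖ ^ 2 - γ * (ℓ wt - ℓ wstar) + γ * ℓ wstar := by
  intro γ wnext
  have hγ : 0 ≤ γ := le_min (div_nonneg (hnonneg wt) (by positivity)) hη.le
  have hγg : γ * ‖g wt‖ ^ 2 ≤ ℓ wt := min_div_add_mul_le η (hnonneg wt) (sq_nonneg _) hδ
  calc ‖wnext - wstar‖ ^ 2 ≤ ‖wt - γ • g wt - wstar‖ ^ 2 := by
        gcongr
        exact norm_sub_le_of_forall_norm_sub_le hK (hproj _).1 (hproj _).2 hws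
    _ ≤ ‖wt - wstar‖ ^ 2 - γ * (ℓ wt - ℓ wstar) + γ * ℓ wstar :=
        hconv.norm_sub_smul_gradient_sub_sq_le (mem_univ _) (mem_univ _) (hgrad wt) hγ hγg

/-- Basic iterate bound for one projected ALI-G step in the convex setting:
`‖w_{t+1} - w⋆‖² ≤ ‖w_t - w⋆‖² - γ_t(ℓ(w_t) - ℓ(w⋆)) + γ_t ℓ(w⋆)`. -/
theorem alig_basic_iterate_bound
    {p : ℕ} (ℓ : EuclideanSpace ℝ (Fin p) → ℝ)
    (g : EuclideanSpace ℝ (Fin p) → EuclideanSpace ℝ (Fin p))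
    (δ η : ℝ) (hδ : 0 ≤ δ) (hη : 0 < η)
    (hconv : ConvexOn ℝ Set.univ ℓ)
    (hgrad : ∀ w, HasGradientAt ℓ (g w) w)
    (hnonneg : ∀ w, 0 ≤ ℓ w)
    (K : Set (EuclideanSpace ℝ (Fin p))) (hK : Convex ℝ K)
    (proj : EuclideanSpace ℝ (Fin p) → EuclideanSpace ℝ (Fin p))
    (hproj : ∀ x, proj x ∈ K ∧ ∀ y ∈ K, ‖x - proj x‖ ≤ ‖x - y‖)
    (wt wstar : EuclideanSpace ℝ (Fin p)) (hwt : wt ∈ K) (hws : wstar ∈ K) :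
    let γ := min (ℓ wt / (‖g wt‖ ^ 2 + δ)) η
    let wnext := proj (wt - γ • g wt)
    ‖wnext - wstar‖ ^ 2 ≤
      ‖wt - wstar‖ ^ 2 - γ * (ℓ wt - ℓ wstar) + γ * ℓ wstar :=
  alig_basic_iterate_bound_general ℓ g δ η hδ hη hconv hgrad hnonneg K hK proj hproj wt wstar hws
end

section
/- Linear convergence of ALI-G for strongly convex smooth losses with small η: suppose Ω convex, each ℓ_z is α-strongly convex, β-smooth, non-negative, ℓ_z(w_⋆) ≤ ε for all z, δ > 2βε, and 0 < η ≤ 1/(2β). Then the ALI-G iterates satisfy E[f(w_{T+1})] - f_⋆ ≤ β·exp(-αηT/2)·‖w₀ - w_⋆‖² + δ/α + 4εβ/α. -/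
/-!
The estimate holds pathwise, for every realisation of the samples. Fix a sample loss `ℓ`, let
`x₀` be its minimiser and `m = ℓ x₀`. Smoothness gives `‖∇ℓ w‖² ≤ 2β (ℓ w - m)` and strong
convexity gives `√(α/2) ‖w - w⋆‖ ≤ √(ℓ w - m) + √(ℓ w⋆ - m)`. With these, one projected ALI-G
step satisfies `‖w⁺ - w⋆‖² ≤ (1 - αη/2) ‖w - w⋆‖² + ηδ/(2β) + ηε`: when the step size is at
least `η/2` this is immediate, and otherwise it is the uncapped Polyak step
`ℓ w / (‖∇ℓ w‖² + δ)`, which is then large enough because `2βε < δ`. Unrolling the recursion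
and using `ℓ u ≤ 2 ℓ w⋆ + β ‖u - w⋆‖²` for nonnegative `β`-smooth losses bounds `f`, while
`f⋆ ≥ 0`.
-/

open RealInnerProductSpace MeasureTheory ProbabilityTheory Filter Set

section Smooth

variable {E : Type*} [NormedAddCommGroup E] [InnerProductSpace ℝ E] [CompleteSpace E]
  {φ : E → ℝ} {g : E → E} {α β : ℝ}

theorem le_add_inner_add_of_lipschitz_gradient (hgrad : ∀ x, HasGradientAt φ (g x) x)
    (hlip : ∀ u v, ‖g u - g v‖ ≤ β * ‖u - v‖) (u v : E) :
    φ u ≤ φ v + ⟪g v, u - v⟫ + β / 2 * ‖u - v‖ ^ 2 := by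
  set d := u - v
  let ψ : ℝ → ℝ := fun t => φ (v + t • d) - t * ⟪g v, d⟫ - β / 2 * t ^ 2 * ‖d‖ ^ 2
  have hψ (t : ℝ) : HasDerivAt ψ (⟪g (v + t • d) - g v, d⟫ - β * t * ‖d‖ ^ 2) t := by
    have hline : HasDerivAt (fun t : ℝ => v + t • d) d t := by
      simpa using ((hasDerivAt_id t).smul_const d).const_add v
    refine ((((hgrad _).hasFDerivAt.comp_hasDerivAt t hline).sub
      ((hasDerivAt_id' t).mul_const ⟪g v, d⟫)).sub
      (((hasDerivAt_pow 2 t).const_mul (β / 2)).mul_const (‖d‖ ^ 2))).congr_deriv ?_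
    simp only [InnerProductSpace.toDual_apply_apply, inner_sub_left]
    ring
  have hψ_nonpos : ∀ t ∈ interior (Icc (0 : ℝ) 1), deriv ψ t ≤ 0 := by
    intro t ht
    rw [interior_Icc] at ht
    rw [(hψ t).deriv, sub_nonpos]
    calc ⟪g (v + t • d) - g v, d⟫ ≤ ‖g (v + t • d) - g v‖ * ‖d‖ := real_inner_le_norm _ _
      _ ≤ β * ‖t • d‖ * ‖d‖ := by gcongr; simpa using hlip (v + t • d) v
      _ = β * t * ‖d‖ ^ 2 := by rw [norm_smul, Real.norm_of_nonneg ht.1.le]; ring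
  have h01 : ψ 1 ≤ ψ 0 := antitoneOn_of_deriv_nonpos (convex_Icc 0 1)
    (fun t _ => (hψ t).continuousAt.continuousWithinAt)
    (fun t _ => (hψ t).differentiableAt.differentiableWithinAt) hψ_nonpos
    (left_mem_Icc.2 zero_le_one) (right_mem_Icc.2 zero_le_one) zero_le_one
  simp only [ψ, d, one_smul, add_sub_cancel, zero_smul, add_zero] at h01
  linarith

theorem sq_norm_gradient_le (hβ : 0 < β) (hgrad : ∀ x, HasGradientAt φ (g x) x)
    (hlip : ∀ u v, ‖g u - g v‖ ≤ β * ‖u - v‖) {c : ℝ} (hc : ∀ x, c ≤ φ x) (x : E) :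
    ‖g x‖ ^ 2 ≤ 2 * β * (φ x - c) := by
  have h := le_add_inner_add_of_lipschitz_gradient hgrad hlip (x - β⁻¹ • g x) x
  rw [sub_sub_cancel_left, inner_neg_right, real_inner_smul_right, real_inner_self_eq_norm_sq,
    norm_neg, norm_smul, Real.norm_of_nonneg (by positivity), mul_pow, inv_mul_eq_div,
    inv_pow, ← div_eq_inv_mul] at h
  have hmin := hc (x - β⁻¹ • g x)
  have hstep : φ x + -(‖g x‖ ^ 2 / β) + β / 2 * (‖g x‖ ^ 2 / β ^ 2) =
      φ x - ‖g x‖ ^ 2 / (2 * β) := by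
    field_simp; ring
  have : ‖g x‖ ^ 2 / (2 * β) ≤ φ x - c := by linarith
  rwa [div_le_iff₀ (by positivity), mul_comm] at this

theorem le_of_strongConvex_of_lipschitz_gradient [Nontrivial E]
    (hgrad : ∀ x, HasGradientAt φ (g x) x) (hlip : ∀ u v, ‖g u - g v‖ ≤ β * ‖u - v‖)
    (hstrong : ∀ u w, φ w + ⟪g w, u - w⟫ + α / 2 * ‖u - w‖ ^ 2 ≤ φ u) : α ≤ β := by
  obtain ⟨v, hv⟩ := exists_ne (0 : E)
  have hupper := le_add_inner_add_of_lipschitz_gradient hgrad hlip v 0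
  have hlower := hstrong v 0
  have hv2 : 0 < ‖v - 0‖ ^ 2 := by rw [sub_zero]; exact pow_pos (norm_pos_iff.2 hv) 2
  nlinarith

theorem le_two_mul_add_of_nonneg (hβ : 0 < β) (hgrad : ∀ x, HasGradientAt φ (g x) x)
    (hlip : ∀ u v, ‖g u - g v‖ ≤ β * ‖u - v‖) (hφ : ∀ x, 0 ≤ φ x) (u v : E) :
    φ u ≤ 2 * φ v + β * ‖u - v‖ ^ 2 := by
  have hdesc := le_add_inner_add_of_lipschitz_gradient hgrad hlip u v
  have hgv := sq_norm_gradient_le hβ hgrad hlip hφ v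
  have hcs := real_inner_le_norm (g v) (u - v)
  nlinarith [sq_nonneg (‖g v‖ - β * ‖u - v‖)]

theorem exists_forall_le_of_strongConvex [ProperSpace E] (hα : 0 < α)
    (hgrad : ∀ x, HasGradientAt φ (g x) x)
    (hstrong : ∀ u w, φ w + ⟪g w, u - w⟫ + α / 2 * ‖u - w‖ ^ 2 ≤ φ u) :
    ∃ x₀, ∀ y, φ x₀ ≤ φ y := by
  have hcont : Continuous φ :=
    continuous_iff_continuousAt.2 fun x => (hgrad x).differentiableAt.continuousAt
  have hlow (u : E) : φ 0 + ‖u‖ * (α / 2 * ‖u‖ - ‖g 0‖) ≤ φ u := by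
    have h := hstrong u 0
    have hcs := neg_le_of_abs_le (abs_real_inner_le_norm (g 0) u)
    simp only [sub_zero] at h
    nlinarith
  have hquad : Tendsto (fun t : ℝ => φ 0 + t * (α / 2 * t - ‖g 0‖)) atTop atTop :=
    tendsto_atTop_add_const_left _ _ (tendsto_id.atTop_mul_atTop₀
      (tendsto_atTop_add_const_right _ _ (tendsto_id.const_mul_atTop (by positivity))))
  exact hcont.exists_forall_le
    (tendsto_atTop_mono hlow (hquad.comp tendsto_norm_cocompact_atTop))

theorem half_mul_sq_norm_sub_le_of_forall_le {x₀ : E}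
    (hstrong : ∀ u w, φ w + ⟪g w, u - w⟫ + α / 2 * ‖u - w‖ ^ 2 ≤ φ u)
    (hgrad : HasGradientAt φ (g x₀) x₀) (hx₀ : ∀ y, φ x₀ ≤ φ y) (x : E) :
    α / 2 * ‖x - x₀‖ ^ 2 ≤ φ x - φ x₀ := by
  have hmin : IsLocalMin φ x₀ := Eventually.of_forall hx₀
  have hg : g x₀ = 0 := by simpa using hmin.hasFDerivAt_eq_zero hgrad.hasFDerivAt
  have := hstrong x x₀
  rw [hg, inner_zero_left] at this
  linarith

end Smooth

theorem half_mul_sq_norm_sub_le_sq_sqrt_add {E : Type*} [SeminormedAddCommGroup E] {α A B : ℝ}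
    (hα : 0 ≤ α) {u v x₀ : E} (hu : α / 2 * ‖u - x₀‖ ^ 2 ≤ A) (hv : α / 2 * ‖v - x₀‖ ^ 2 ≤ B) :
    α / 2 * ‖u - v‖ ^ 2 ≤ (√A + √B) ^ 2 := by
  set c := √(α / 2)
  have hc : c ^ 2 = α / 2 := Real.sq_sqrt (by positivity)
  have hA : c * ‖u - x₀‖ ≤ √A := Real.le_sqrt_of_sq_le (by rwa [mul_pow, hc])
  have hB : c * ‖v - x₀‖ ≤ √B := Real.le_sqrt_of_sq_le (by rwa [mul_pow, hc])
  have htri : c * ‖u - v‖ ≤ c * ‖u - x₀‖ + c * ‖v - x₀‖ := by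
    rw [← mul_add, norm_sub_rev v]
    exact mul_le_mul_of_nonneg_left (norm_sub_le_norm_sub_add_norm_sub _ _ _) (Real.sqrt_nonneg _)
  rw [← hc, ← mul_pow]
  exact pow_le_pow_left₀ (by positivity) (htri.trans (add_le_add hA hB)) 2

theorem norm_sub_le_norm_sub_of_forall_norm_sub_le {E : Type*} [NormedAddCommGroup E]
    [InnerProductSpace ℝ E] {K : Set E} (hK : Convex ℝ K) {x p y : E} (hp : p ∈ K) (hy : y ∈ K)
    (hmin : ∀ z ∈ K, ‖x - p‖ ≤ ‖x - z‖) : ‖p - y‖ ≤ ‖x - y‖ := by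
  have : Nonempty K := ⟨⟨p, hp⟩⟩
  have hinf : ‖x - p‖ = ⨅ z : K, ‖x - z‖ := le_antisymm (le_ciInf fun z => hmin z z.2)
    (ciInf_le ⟨0, by rintro _ ⟨z, rfl⟩; positivity⟩ (⟨p, hp⟩ : K))
  have hvar := (norm_eq_iInf_iff_real_inner_le_zero hK hp).1 hinf y hy
  have hexp : ‖x - y‖ ^ 2 = ‖x - p‖ ^ 2 - 2 * ⟪x - p, y - p⟫ + ‖p - y‖ ^ 2 := by
    rw [norm_sub_rev p y, ← norm_sub_sq_real, sub_sub_sub_cancel_right]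
  rw [← sq_le_sq₀ (norm_nonneg _) (norm_nonneg _), hexp]
  nlinarith [sq_nonneg ‖x - p‖]

theorem le_pow_mul_add_div_of_le_mul_add {u : ℕ → ℝ} {q c : ℝ} (hq : 0 < q) (hq1 : q ≤ 1)
    (hc : 0 ≤ c) (hu : ∀ t, u (t + 1) ≤ (1 - q) * u t + c) (t : ℕ) :
    u t ≤ (1 - q) ^ t * u 0 + c / q := by
  induction t with
  | zero => simpa using div_nonneg hc hq.le
  | succ t ih =>
    calc u (t + 1) ≤ (1 - q) * ((1 - q) ^ t * u 0 + c / q) + c :=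
          (hu t).trans (by gcongr)
      _ = (1 - q) ^ (t + 1) * u 0 + c / q := by field_simp; ring

theorem integral_le_of_nonneg_of_le {Ω : Type*} [MeasurableSpace Ω] {μ : Measure Ω}
    [IsProbabilityMeasure μ] {f : Ω → ℝ} {C : ℝ} (hf : ∀ x, 0 ≤ f x) (hC : ∀ x, f x ≤ C) :
    ∫ x, f x ∂μ ≤ C := by
  simpa using integral_mono_of_nonneg (Eventually.of_forall hf) (integrable_const (μ := μ) C)
    (Eventually.of_forall hC)

theorem integral_le_two_mul_add_of_nonneg {Z E : Type*} [MeasurableSpace Z] {μ : Measure Z}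
    [IsProbabilityMeasure μ] [NormedAddCommGroup E] [InnerProductSpace ℝ E] [CompleteSpace E]
    {ℓ : Z → E → ℝ} {g : Z → E → E} {β ε : ℝ} (hβ : 0 < β)
    (hgrad : ∀ zi x, HasGradientAt (ℓ zi) (g zi x) x)
    (hlip : ∀ zi u v, ‖g zi u - g zi v‖ ≤ β * ‖u - v‖) (hnonneg : ∀ zi x, 0 ≤ ℓ zi x) {v : E}
    (hv : ∀ zi, ℓ zi v ≤ ε) (u : E) : ∫ zi, ℓ zi u ∂μ ≤ 2 * ε + β * ‖u - v‖ ^ 2 :=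
  integral_le_of_nonneg_of_le (hnonneg · u) fun zi =>
    (le_two_mul_add_of_nonneg hβ (hgrad zi) (hlip zi) (hnonneg zi) u v).trans
      (by gcongr; exact hv zi)

theorem two_mul_mul_le_of_le {X Δ a b : ℝ} (hX : 0 ≤ X) (ha : 0 ≤ a) (hb : 0 ≤ b)
    (hXΔ : X ≤ Δ) (hbΔ : b ^ 2 ≤ Δ) : 2 * X * (a * b) ≤ 2 * a ^ 4 + 2 * a ^ 3 * b + X * Δ := by
  rcases le_or_gt b (2 * a) with hba | hab
  · nlinarith [sq_nonneg (X - a * b), mul_le_mul_of_nonneg_left hXΔ hX,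
      mul_le_mul_of_nonneg_left hba (by positivity : 0 ≤ a ^ 2 * b)]
  · have := mul_le_mul_of_nonneg_left (mul_le_mul_of_nonneg_right hab.le hb) hX
    nlinarith [mul_le_mul_of_nonneg_left hbΔ hX, pow_nonneg ha 4, mul_nonneg (pow_nonneg ha 3) hb]

-- `hγ` holds for the uncapped Polyak step `γ = ℓ w / (‖∇ℓ w‖² + δ)` when `a² ≤ ℓ w` and
-- `‖∇ℓ w‖² ≤ 2βa²`.
theorem sub_two_mul_mul_le {β δ η γ a b : ℝ} (hβ : 0 < β) (hδ : 0 < δ) (hη : 0 ≤ η)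
    (hηβ : 2 * β * η ≤ 1) (ha : 0 ≤ a) (hb : 0 ≤ b) (hbδ : 2 * β * b ^ 2 ≤ δ)
    (hγ : a ^ 2 ≤ γ * (2 * β * a ^ 2 + δ)) :
    (η - 2 * γ) * (a ^ 2 + 2 * a * b) ≤ γ * a ^ 2 + η * δ / (2 * β) := by
  set D := 2 * β * a ^ 2 + δ
  have hD : 0 < D := by positivity
  have hpoly := two_mul_mul_le_of_le (X := η * δ) (Δ := δ / (2 * β)) (by positivity) ha hb
    (by rw [le_div_iff₀ (by positivity)]; nlinarith) (by rw [le_div_iff₀ (by positivity)]; linarith)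
  have hsplit : η * δ / (2 * β) * D = η * δ * a ^ 2 + η * δ * (δ / (2 * β)) := by
    simp only [D]; field_simp
  have hab : 0 ≤ a ^ 2 + 2 * a * b := by positivity
  rw [← mul_le_mul_iff_of_pos_right hD]
  calc (η - 2 * γ) * (a ^ 2 + 2 * a * b) * D = (η * D - 2 * (γ * D)) * (a ^ 2 + 2 * a * b) := by
        ring
    _ ≤ (η * δ - a ^ 2) * (a ^ 2 + 2 * a * b) := by
        refine mul_le_mul_of_nonneg_right ?_ hab
        nlinarith [mul_le_mul_of_nonneg_right hηβ (sq_nonneg a)]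
    _ ≤ a ^ 2 * a ^ 2 + η * δ * a ^ 2 + η * δ * (δ / (2 * β)) := by nlinarith
    _ ≤ (γ * a ^ 2 + η * δ / (2 * β)) * D := by
        rw [add_mul, hsplit]
        nlinarith [mul_le_mul_of_nonneg_left hγ (sq_nonneg a)]

noncomputable def aligStepSize (δ η loss gradNormSq : ℝ) : ℝ := min (loss / (gradNormSq + δ)) η

-- `r`, `s`, `G` stand for `‖w - w⋆‖²`, `⟪∇ℓ w, w - w⋆⟫`, `‖∇ℓ w‖²`, and `a² + m`, `b² + m` for
-- `ℓ w`, `ℓ w⋆`, where `m` is the minimum of `ℓ`.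
theorem aligStepSize_sq_dist_le {α β δ ε η r s G m a b : ℝ} (hα : 0 ≤ α) (hβ : 0 < β) (hδ : 0 < δ)
    (hδε : 2 * β * ε ≤ δ) (hη : 0 < η) (hηβ : 2 * β * η ≤ 1) (hm : 0 ≤ m) (ha : 0 ≤ a)
    (hb : 0 ≤ b) (hbε : b ^ 2 + m ≤ ε) (hG0 : 0 ≤ G) (hG : G ≤ 2 * β * a ^ 2) (hr0 : 0 ≤ r)
    (hr : α / 2 * r ≤ (a + b) ^ 2) (hs : a ^ 2 - b ^ 2 + α / 2 * r ≤ s) :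
    r - 2 * aligStepSize δ η (a ^ 2 + m) G * s + aligStepSize δ η (a ^ 2 + m) G ^ 2 * G ≤
      (1 - α * η / 2) * r + η * δ / (2 * β) + η * ε := by
  set γ := aligStepSize δ η (a ^ 2 + m) G
  have hGδ : 0 < G + δ := by positivity
  have hγ0 : 0 ≤ γ := le_min (by positivity) hη.le
  have hγη : γ ≤ η := min_le_right _ _
  have hγG : γ * (G + δ) ≤ a ^ 2 + m := (le_div_iff₀ hGδ).1 (min_le_left _ _)
  have hbase : r - 2 * γ * s + γ ^ 2 * G ≤
      (1 - α * γ) * r - γ * (a ^ 2 + m) + 2 * γ * (b ^ 2 + m) := by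
    nlinarith [mul_le_mul_of_nonneg_left hs hγ0, mul_le_mul_of_nonneg_left hγG hγ0]
  rcases le_or_gt η (2 * γ) with hlong | hshort
  · have hεδ : η * ε ≤ η * δ / (2 * β) := by
      rw [le_div_iff₀ (by positivity)]; nlinarith
    nlinarith [mul_le_mul_of_nonneg_left hlong (mul_nonneg hα hr0),
      mul_le_mul hγη hbε (by positivity) hη.le, mul_nonneg hγ0 (by positivity : 0 ≤ a ^ 2 + m)]
  · have hγeq : γ * (G + δ) = a ^ 2 + m := by
      have hpolyak : γ = (a ^ 2 + m) / (G + δ) :=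
        (min_choice _ _).resolve_right fun h => by change γ = η at h; linarith
      rw [hpolyak, div_mul_cancel₀ _ hGδ.ne']
    have hcore := sub_two_mul_mul_le (γ := γ) hβ hδ hη.le hηβ ha hb (by nlinarith)
      (by nlinarith [mul_le_mul_of_nonneg_left hG hγ0])
    have hr' : α * (η / 2 - γ) * r ≤ (η - 2 * γ) * (a + b) ^ 2 := by
      nlinarith [mul_le_mul_of_nonneg_left hr (by linarith : 0 ≤ η - 2 * γ)]
    nlinarith [mul_le_mul_of_nonneg_left hγη hm, mul_le_mul_of_nonneg_left hbε hη.le]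

section Step

variable {E : Type*} [NormedAddCommGroup E] [InnerProductSpace ℝ E] [ProperSpace E]
  {α β δ ε η : ℝ}

theorem sq_norm_sub_aligStepSize_smul_sub_le {φ : E → ℝ} {g : E → E} (hα : 0 < α) (hβ : 0 < β)
    (hδ : 0 < δ) (hδε : 2 * β * ε ≤ δ) (hη : 0 < η) (hηβ : 2 * β * η ≤ 1)
    (hgrad : ∀ x, HasGradientAt φ (g x) x) (hlip : ∀ u v, ‖g u - g v‖ ≤ β * ‖u - v‖)
    (hstrong : ∀ u w, φ w + ⟪g w, u - w⟫ + α / 2 * ‖u - w‖ ^ 2 ≤ φ u) (hφ : ∀ x, 0 ≤ φ x)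
    {wstar : E} (hwstar : φ wstar ≤ ε) (w : E) :
    ‖w - aligStepSize δ η (φ w) (‖g w‖ ^ 2) • g w - wstar‖ ^ 2 ≤
      (1 - α * η / 2) * ‖w - wstar‖ ^ 2 + η * δ / (2 * β) + η * ε := by
  obtain ⟨x₀, hx₀⟩ := exists_forall_le_of_strongConvex hα hgrad hstrong
  have hsq := half_mul_sq_norm_sub_le_of_forall_le hstrong (hgrad x₀) hx₀
  have ha : √(φ w - φ x₀) ^ 2 = φ w - φ x₀ := Real.sq_sqrt (sub_nonneg.2 (hx₀ w))
  have hb : √(φ wstar - φ x₀) ^ 2 = φ wstar - φ x₀ := Real.sq_sqrt (sub_nonneg.2 (hx₀ wstar))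
  have hinner : φ w - φ wstar + α / 2 * ‖w - wstar‖ ^ 2 ≤ ⟪g w, w - wstar⟫ := by
    have := hstrong wstar w
    rw [← neg_sub w wstar, inner_neg_right, norm_neg] at this
    linarith
  have hstep := aligStepSize_sq_dist_le (G := ‖g w‖ ^ 2) (s := ⟪g w, w - wstar⟫) hα.le hβ hδ
    hδε hη hηβ (hφ x₀) (Real.sqrt_nonneg _) (Real.sqrt_nonneg _) (by linarith) (sq_nonneg _)
    (by rw [ha]; exact sq_norm_gradient_le hβ hgrad hlip hx₀ w) (sq_nonneg _)
    (half_mul_sq_norm_sub_le_sq_sqrt_add hα.le (hsq w) (hsq wstar)) (by rw [ha, hb]; linarith)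
  rw [ha, sub_add_cancel] at hstep
  rw [sub_right_comm, norm_sub_sq_real, real_inner_smul_right, norm_smul, mul_pow,
    Real.norm_eq_abs, sq_abs, real_inner_comm]
  linarith

theorem sq_norm_alig_iterate_sub_le {Z : Type*} {ℓ : Z → E → ℝ} {g : Z → E → E} (hα : 0 < α)
    (hβ : 0 < β) (hαβ : α ≤ β) (hδ : 0 < δ) (hδε : 2 * β * ε ≤ δ) (hη : 0 < η)
    (hηβ : 2 * β * η ≤ 1) (hε : 0 ≤ ε) (hgrad : ∀ zi x, HasGradientAt (ℓ zi) (g zi x) x)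
    (hlip : ∀ zi u v, ‖g zi u - g zi v‖ ≤ β * ‖u - v‖)
    (hstrong : ∀ zi u w, ℓ zi w + ⟪g zi w, u - w⟫ + α / 2 * ‖u - w‖ ^ 2 ≤ ℓ zi u)
    (hnonneg : ∀ zi x, 0 ≤ ℓ zi x) {K : Set E} (hK : Convex ℝ K) {proj : E → E}
    (hproj : ∀ x, proj x ∈ K ∧ ∀ y ∈ K, ‖x - proj x‖ ≤ ‖x - y‖) {wstar : E} (hws : wstar ∈ K)
    (hinterp : ∀ zi, ℓ zi wstar ≤ ε) (ζ : ℕ → Z) (w : ℕ → E)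
    (hw : ∀ t, w (t + 1) = proj (w t -
      aligStepSize δ η (ℓ (ζ t) (w t)) (‖g (ζ t) (w t)‖ ^ 2) • g (ζ t) (w t))) (T : ℕ) :
    ‖w (T + 1) - wstar‖ ^ 2 ≤
      Real.exp (-(α * η * T) / 2) * ‖w 0 - wstar‖ ^ 2 + (δ / (α * β) + 2 * ε / α) := by
  set q := α * η / 2
  have hq : 0 < q := by positivity
  have hq1 : q ≤ 1 := by simp only [q]; nlinarith [mul_le_mul_of_nonneg_right hαβ hη.le]
  have hcontract (t : ℕ) :
      ‖w (t + 1) - wstar‖ ^ 2 ≤ (1 - q) * ‖w t - wstar‖ ^ 2 + (η * δ / (2 * β) + η * ε) := by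
    rw [hw]
    set x := w t - aligStepSize δ η (ℓ (ζ t) (w t)) (‖g (ζ t) (w t)‖ ^ 2) • g (ζ t) (w t)
    calc ‖proj x - wstar‖ ^ 2 ≤ ‖x - wstar‖ ^ 2 := pow_le_pow_left₀ (norm_nonneg _)
          (norm_sub_le_norm_sub_of_forall_norm_sub_le hK (hproj x).1 hws (hproj x).2) 2
      _ ≤ _ := (sq_norm_sub_aligStepSize_smul_sub_le hα hβ hδ hδε hη hηβ (hgrad _) (hlip _)
            (hstrong _) (hnonneg _) (hinterp _) _).trans_eq (by ring)
  have hiter := le_pow_mul_add_div_of_le_mul_add (u := fun t => ‖w t - wstar‖ ^ 2) hq hq1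
    (by positivity) hcontract (T + 1)
  have hpow : (1 - q) ^ (T + 1) ≤ Real.exp (-(α * η * T) / 2) :=
    calc (1 - q) ^ (T + 1) ≤ (1 - q) ^ T :=
          pow_le_pow_of_le_one (by linarith) (by linarith) T.le_succ
      _ ≤ Real.exp (-q) ^ T := pow_le_pow_left₀ (by linarith) (Real.one_sub_le_exp_neg q) T
      _ = Real.exp (-(α * η * T) / 2) := by rw [← Real.exp_nat_mul]; congr 1; simp only [q]; ring
  have hconst : (η * δ / (2 * β) + η * ε) / q = δ / (α * β) + 2 * ε / α := by
    field_simp; ring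
  rw [hconst] at hiter
  nlinarith [mul_le_mul_of_nonneg_right hpow (sq_nonneg ‖w 0 - wstar‖)]

end Step

theorem alig_strongly_convex_smooth_small_eta_general
    {p : ℕ} {Z : Type*} [MeasurableSpace Z]
    (μ : Measure Z) [IsProbabilityMeasure μ]
    {S : Type*} [MeasurableSpace S] (P : Measure S) [IsProbabilityMeasure P]
    (z : ℕ → S → Z)
    (ℓ : Z → EuclideanSpace ℝ (Fin p) → ℝ)
    (g : Z → EuclideanSpace ℝ (Fin p) → EuclideanSpace ℝ (Fin p))
    (α β δ ε η : ℝ) (hα : 0 < α) (hβ : 0 < β) (hε : 0 ≤ ε) (hδ : 2 * β * ε < δ)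
    (hη₁ : 0 < η) (hη₂ : η ≤ 1 / (2 * β))
    (hstrong : ∀ zi u w, ℓ zi u ≥ ℓ zi w + ⟪g zi w, u - w⟫ + (α / 2) * ‖u - w‖ ^ 2)
    (hsmooth : ∀ zi u v, ‖g zi u - g zi v‖ ≤ β * ‖u - v‖)
    (hgrad : ∀ zi w, HasGradientAt (ℓ zi) (g zi w) w)
    (hnonneg : ∀ zi w, 0 ≤ ℓ zi w)
    (K : Set (EuclideanSpace ℝ (Fin p))) (hK : Convex ℝ K)
    (proj : EuclideanSpace ℝ (Fin p) → EuclideanSpace ℝ (Fin p))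
    (hproj : ∀ x, proj x ∈ K ∧ ∀ y ∈ K, ‖x - proj x‖ ≤ ‖x - y‖)
    (wstar : EuclideanSpace ℝ (Fin p)) (hws : wstar ∈ K)
    (hinterp : ∀ zi, ℓ zi wstar ≤ ε)
    (f : EuclideanSpace ℝ (Fin p) → ℝ) (hf : ∀ w, f w = ∫ zi, ℓ zi w ∂μ)
    (fstar : ℝ) (hfstar : IsGLB (f '' K) fstar)
    (w0 : EuclideanSpace ℝ (Fin p))
    (W : ℕ → S → EuclideanSpace ℝ (Fin p)) (hW0 : ∀ ω, W 0 ω = w0)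
    (hrec : ∀ t ω, W (t + 1) ω = proj (W t ω -
      (min (ℓ (z t ω) (W t ω) / (‖g (z t ω) (W t ω)‖ ^ 2 + δ)) η) •
        g (z t ω) (W t ω)))
    (T : ℕ) :
    (∫ ω, f (W (T + 1) ω) ∂P) - fstar ≤
      β * Real.exp (-(α * η * (T : ℝ)) / 2) * ‖w0 - wstar‖ ^ 2 +
        δ / α + 4 * ε * β / α := by
  have hδ0 : 0 < δ := by nlinarith
  have hηβ : 2 * β * η ≤ 1 := by rwa [le_div_iff₀ (by positivity), mul_comm] at hη₂
  have hf_nonneg (w : EuclideanSpace ℝ (Fin p)) : 0 ≤ f w := by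
    rw [hf]; exact integral_nonneg (hnonneg · w)
  -- In dimension zero `α ≤ β` may fail, but then every iterate is `wstar`.
  rcases subsingleton_or_nontrivial (EuclideanSpace ℝ (Fin p)) with hE | hE
  · have hfstar' : fstar = f wstar := by
      rw [K.subsingleton_of_subsingleton.eq_singleton_of_mem hws, image_singleton] at hfstar
      exact hfstar.unique isGLB_singleton
    simp only [Subsingleton.elim (W (T + 1) _) wstar, integral_const, probReal_univ, one_smul,
      hfstar', sub_self]
    positivity
  obtain ⟨ζ⟩ := nonempty_of_isProbabilityMeasure μ
  have hαβ := le_of_strongConvex_of_lipschitz_gradient (hgrad ζ) (hsmooth ζ) (hstrong ζ)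
  set R := Real.exp (-(α * η * T) / 2) * ‖w0 - wstar‖ ^ 2 + (δ / (α * β) + 2 * ε / α)
  have hdist (ω : S) : ‖W (T + 1) ω - wstar‖ ^ 2 ≤ R := by
    simpa only [hW0] using sq_norm_alig_iterate_sub_le hα hβ hαβ hδ0 hδ.le hη₁ hηβ hε hgrad
      hsmooth hstrong hnonneg hK hproj hws hinterp (z · ω) (W · ω) (hrec · ω) T
  have hloss (ω : S) : f (W (T + 1) ω) ≤ 2 * ε + β * R := by
    rw [hf]
    exact (integral_le_two_mul_add_of_nonneg hβ hgrad hsmooth hnonneg hinterp _).trans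
      (by gcongr; exact hdist ω)
  have hfstar0 : 0 ≤ fstar := hfstar.2 (by rintro _ ⟨w, -, rfl⟩; exact hf_nonneg w)
  have hint := integral_le_of_nonneg_of_le (μ := P) (fun ω => hf_nonneg _) hloss
  have h2ε : 2 * ε ≤ 2 * β * ε / α := by rw [le_div_iff₀ hα]; nlinarith
  have hβR : β * R =
      β * Real.exp (-(α * η * T) / 2) * ‖w0 - wstar‖ ^ 2 + δ / α + 2 * β * ε / α := by
    simp only [R]; field_simp; ring
  linarith [show 4 * ε * β / α = 2 * (2 * β * ε / α) by ring]

/-- Linear convergence of ALI-G for α-strongly convex β-smooth losses with small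
maximal learning-rate 0 < η ≤ 1/(2β):
`E[f(w_{T+1})] - f⋆ ≤ β·exp(-αηT/2)·‖w₀ - w⋆‖² + δ/α + 4εβ/α`. -/
theorem alig_strongly_convex_smooth_small_eta
    {p : ℕ} {Z : Type*} [MeasurableSpace Z]
    (μ : Measure Z) [IsProbabilityMeasure μ]
    {S : Type*} [MeasurableSpace S] (P : Measure S) [IsProbabilityMeasure P]
    (z : ℕ → S → Z) (hz_meas : ∀ t, Measurable (z t))
    (hz_indep : iIndepFun z P)
    (hz_dist : ∀ t, P.map (z t) = μ)
    (ℓ : Z → EuclideanSpace ℝ (Fin p) → ℝ)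
    (g : Z → EuclideanSpace ℝ (Fin p) → EuclideanSpace ℝ (Fin p))
    (α β δ ε η : ℝ) (hα : 0 < α) (hβ : 0 < β) (hε : 0 ≤ ε) (hδ : 2 * β * ε < δ)
    (hη₁ : 0 < η) (hη₂ : η ≤ 1 / (2 * β))
    (hstrong : ∀ zi u w, ℓ zi u ≥ ℓ zi w + ⟪g zi w, u - w⟫ + (α / 2) * ‖u - w‖ ^ 2)
    (hsmooth : ∀ zi u v, ‖g zi u - g zi v‖ ≤ β * ‖u - v‖)
    (hgrad : ∀ zi w, HasGradientAt (ℓ zi) (g zi w) w)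
    (hnonneg : ∀ zi w, 0 ≤ ℓ zi w)
    (K : Set (EuclideanSpace ℝ (Fin p))) (hK : Convex ℝ K)
    (proj : EuclideanSpace ℝ (Fin p) → EuclideanSpace ℝ (Fin p))
    (hproj : ∀ x, proj x ∈ K ∧ ∀ y ∈ K, ‖x - proj x‖ ≤ ‖x - y‖)
    (wstar : EuclideanSpace ℝ (Fin p)) (hws : wstar ∈ K)
    (hinterp : ∀ zi, ℓ zi wstar ≤ ε)
    (f : EuclideanSpace ℝ (Fin p) → ℝ) (hf : ∀ w, f w = ∫ zi, ℓ zi w ∂μ)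
    (fstar : ℝ) (hfstar : IsGLB (f '' K) fstar)
    (w0 : EuclideanSpace ℝ (Fin p)) (hw0 : w0 ∈ K)
    (W : ℕ → S → EuclideanSpace ℝ (Fin p)) (hW0 : ∀ ω, W 0 ω = w0)
    (hrec : ∀ t ω, W (t + 1) ω = proj (W t ω -
      (min (ℓ (z t ω) (W t ω) / (‖g (z t ω) (W t ω)‖ ^ 2 + δ)) η) •
        g (z t ω) (W t ω)))
    (T : ℕ) :
    (∫ ω, f (W (T + 1) ω) ∂P) - fstar ≤
      β * Real.exp (-(α * η * (T : ℝ)) / 2) * ‖w0 - wstar‖ ^ 2 +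
        δ / α + 4 * ε * β / α :=
  alig_strongly_convex_smooth_small_eta_general μ P z ℓ g α β δ ε η hα hβ hε hδ hη₁ hη₂ hstrong
    hsmooth hgrad hnonneg K hK proj hproj wstar hws hinterp f hf fstar hfstar w0 W hW0 hrec T
end
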